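/- The effective resistances on the nested fractal graphs are compatible under decimation: if (q, ρ) satisfies the renormalisation invariance E_0 = ρ Ẽ_0, then for all integers m ≥ n ≥ 0 and all x, y ∈ V_n one has R_m(x,y) = R_n(x,y), where for each k the form E_k(f) := ρ^k Σ_{w∈I^k} E_0((f∘ψ_w)|_{V_0}) is defined for f : V_k → ℝ and R_k(x,y) := (inf{E_k(f) : f : V_k → ℝ, f(x) = 1, f(y) = 0})^{-1} for x ≠ y in V_k, with R_k(x,x) := 0. -/

import Mathlib

open Finset Filter MeasureTheory
open scoped ENNReal RealInnerProductSpace BigOperators Classical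

noncomputable section

variable {d N : ℕ}

/-- The composition `ψ_{i₁} ∘ ⋯ ∘ ψ_{iₙ}` along a word `w = (i₁, …, iₙ)`. -/
def psiWord (ψ : Fin N → EuclideanSpace ℝ (Fin d) → EuclideanSpace ℝ (Fin d)) :
    List (Fin N) → EuclideanSpace ℝ (Fin d) → EuclideanSpace ℝ (Fin d)
  | [] => id
  | i :: w => ψ i ∘ psiWord ψ w

/-- The set of fixed points of the maps `ψ_i`. -/
def fixPts (ψ : Fin N → EuclideanSpace ℝ (Fin d) → EuclideanSpace ℝ (Fin d)) :
    Set (EuclideanSpace ℝ (Fin d)) :=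
  {x | ∃ i, ψ i x = x}

/-- The set `V_0` of essential fixed points: fixed points `x` such that `ψ_i(x) = ψ_j(y)` for
some `i ≠ j` and some fixed point `y`. -/
def essFixPts (ψ : Fin N → EuclideanSpace ℝ (Fin d) → EuclideanSpace ℝ (Fin d)) :
    Set (EuclideanSpace ℝ (Fin d)) :=
  {x | x ∈ fixPts ψ ∧ ∃ i j, i ≠ j ∧ ∃ y ∈ fixPts ψ, ψ i x = ψ j y}

/-- The vertex sets `V_n`: `V_0` is the set of essential fixed points and
`V_{n+1} = ⋃_i ψ_i(V_n)`. -/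
def Vseq (ψ : Fin N → EuclideanSpace ℝ (Fin d) → EuclideanSpace ℝ (Fin d)) :
    ℕ → Set (EuclideanSpace ℝ (Fin d))
  | 0 => essFixPts ψ
  | n + 1 => ⋃ i, ψ i '' Vseq ψ n

/-- An `n`-cell is a set of the form `ψ_w(V_0)` for a word `w` of length `n`. -/
def IsCell (ψ : Fin N → EuclideanSpace ℝ (Fin d) → EuclideanSpace ℝ (Fin d)) (n : ℕ)
    (C : Set (EuclideanSpace ℝ (Fin d))) : Prop :=
  ∃ w : List (Fin N), w.length = n ∧ C = psiWord ψ w '' essFixPts ψ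

/-- The signed distance-like quantity determining on which side of the hyperplane `H_{xy}`
perpendicularly bisecting `x` and `y` a point `z` lies (`z ∈ H_{xy}` iff it vanishes). -/
def sideVal (x y z : EuclideanSpace ℝ (Fin d)) : ℝ :=
  ⟪z - midpoint ℝ x y, y - x⟫

/-- Reflection `U_{xy}` in the hyperplane perpendicularly bisecting `x` and `y`. -/
def reflectPB (x y z : EuclideanSpace ℝ (Fin d)) : EuclideanSpace ℝ (Fin d) :=
  z - ((2 * sideVal x y z) / ⟪y - x, y - x⟫) • (y - x)

/-- The axioms of a nested fractal (Lindstrøm): `(ψ_i)` is a family of contracting similitudes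
with ratio `β⁻¹`, `F` is the associated attractor, `|V_0| ≥ 2`, and the open set condition,
connectivity, symmetry and nesting axioms hold. -/
structure IsNestedFractal (β : ℝ)
    (ψ : Fin N → EuclideanSpace ℝ (Fin d) → EuclideanSpace ℝ (Fin d))
    (F : Set (EuclideanSpace ℝ (Fin d))) : Prop where
  beta_gt_one : 1 < β
  similitude : ∀ i, ∃ U : EuclideanSpace ℝ (Fin d) ≃ₗᵢ[ℝ] EuclideanSpace ℝ (Fin d),
    ∃ γ : EuclideanSpace ℝ (Fin d), ∀ x, ψ i x = β⁻¹ • U x + γ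
  F_nonempty : F.Nonempty
  F_compact : IsCompact F
  F_invariant : F = ⋃ i, ψ i '' F
  v0_nontrivial : (essFixPts ψ).Nontrivial
  open_set_condition : ∃ W : Set (EuclideanSpace ℝ (Fin d)), W.Nonempty ∧ IsOpen W ∧
    Bornology.IsBounded W ∧ (Pairwise fun i j => Disjoint (ψ i '' W) (ψ j '' W)) ∧
    (⋃ i, ψ i '' W) ⊆ W
  connectivity : ∀ i i' : Fin N, ∃ (n : ℕ) (seq : ℕ → Fin N), seq 0 = i ∧ seq n = i' ∧
    ∀ k < n, ((ψ (seq k) '' essFixPts ψ) ∩ (ψ (seq (k + 1)) '' essFixPts ψ)).Nonempty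
  symmetry : ∀ x ∈ essFixPts ψ, ∀ y ∈ essFixPts ψ, x ≠ y →
    ∀ (n : ℕ) (C : Set (EuclideanSpace ℝ (Fin d))), IsCell ψ n C →
      IsCell ψ n (reflectPB x y '' C) ∧
        ((∃ a ∈ C, 0 < sideVal x y a) → (∃ b ∈ C, sideVal x y b < 0) →
          reflectPB x y '' C = C)
  nesting : ∀ n : ℕ, 1 ≤ n → ∀ w w' : List (Fin N), w.length = n → w'.length = n → w ≠ w' →
    (psiWord ψ w '' F) ∩ (psiWord ψ w' '' F) =
      (psiWord ψ w '' essFixPts ψ) ∩ (psiWord ψ w' '' essFixPts ψ)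

/-- The quadratic form `E_0(f) = (1/2) Σ_{x,y ∈ V_0} q_{x,y} (f(x) - f(y))²` on functions,
where `V0` is a finite vertex set. -/
def en0 (V0 : Finset (EuclideanSpace ℝ (Fin d)))
    (q : EuclideanSpace ℝ (Fin d) → EuclideanSpace ℝ (Fin d) → ℝ)
    (f : EuclideanSpace ℝ (Fin d) → ℝ) : ℝ :=
  (1 / 2) * ∑ x ∈ V0, ∑ y ∈ V0, q x y * (f x - f y) ^ 2

/-- The renormalised form `Ẽ_0(f) = inf { Σ_{i∈I} E_0(g ∘ ψ_i) : g|_{V_0} = f }` (functions on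
`V_1` are represented by functions on `ℝ^d`; `E_0` only depends on values on `V_0`). -/
def en0tilde (ψ : Fin N → EuclideanSpace ℝ (Fin d) → EuclideanSpace ℝ (Fin d))
    (V0 : Finset (EuclideanSpace ℝ (Fin d)))
    (q : EuclideanSpace ℝ (Fin d) → EuclideanSpace ℝ (Fin d) → ℝ)
    (f : EuclideanSpace ℝ (Fin d) → ℝ) : ℝ :=
  sInf {t | ∃ g : EuclideanSpace ℝ (Fin d) → ℝ,
    (∀ x ∈ V0, g x = f x) ∧ t = ∑ i : Fin N, en0 V0 q (g ∘ ψ i)}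

/-- The level-`n` energy `E_n(f) := ρ^n Σ_{w ∈ Iⁿ} E_0(f ∘ ψ_w)`. -/
def enLevel (ψ : Fin N → EuclideanSpace ℝ (Fin d) → EuclideanSpace ℝ (Fin d))
    (V0 : Finset (EuclideanSpace ℝ (Fin d)))
    (q : EuclideanSpace ℝ (Fin d) → EuclideanSpace ℝ (Fin d) → ℝ) (ρ : ℝ) (n : ℕ)
    (f : EuclideanSpace ℝ (Fin d) → ℝ) : ℝ :=
  ρ ^ n * ∑ w : Fin n → Fin N, en0 V0 q (f ∘ psiWord ψ (List.ofFn w))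

/-- The level-`n` effective resistance
`R_n(x,y) := (inf {E_n(f) : f(x) = 1, f(y) = 0})⁻¹` for `x ≠ y`, with `R_n(x,x) := 0`. -/
def resLevel (ψ : Fin N → EuclideanSpace ℝ (Fin d) → EuclideanSpace ℝ (Fin d))
    (V0 : Finset (EuclideanSpace ℝ (Fin d)))
    (q : EuclideanSpace ℝ (Fin d) → EuclideanSpace ℝ (Fin d) → ℝ) (ρ : ℝ) (n : ℕ)
    (x y : EuclideanSpace ℝ (Fin d)) : ℝ :=
  if x = y then 0
  else (sInf {t | ∃ f : EuclideanSpace ℝ (Fin d) → ℝ,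
    f x = 1 ∧ f y = 0 ∧ t = enLevel ψ V0 q ρ n f})⁻¹

end

/-!
The energies only increase with the level: `E_0 = ρ Ẽ_0 ≤ ρ Σ_i E_0(· ∘ ψ_i)`, applied on every
`m`-cell, gives `E_m(f) ≤ E_{m+1}(f)`. Conversely, on each `m`-cell `ψ_w(V_0)` one may extend
`f ∘ ψ_w` to `V_1` almost optimally for `Ẽ_0`; by the nesting axiom two distinct `m`-cells meet
only in points of their boundaries `ψ_w(V_0)`, where all these extensions agree with `f`, so they
glue to a function `g` on `V_{m+1}` extending `f|_{V_m}` with `E_{m+1}(g) ≤ E_m(f) + ε`.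
Hence the infima defining `R_m(x,y)` and `R_{m+1}(x,y)` coincide for `x, y ∈ V_m`.
-/

open Function List

section Words

variable {d N : ℕ} {ψ : Fin N → EuclideanSpace ℝ (Fin d) → EuclideanSpace ℝ (Fin d)}

theorem psiWord_append (u v : List (Fin N)) :
    psiWord ψ (u ++ v) = psiWord ψ u ∘ psiWord ψ v := by
  induction u with
  | nil => rfl
  | cons i u ih => simp only [cons_append, psiWord, ih, comp_assoc]

theorem psiWord_injective (h : ∀ i, Injective (ψ i)) (w : List (Fin N)) :
    Injective (psiWord ψ w) := by
  induction w with
  | nil => exact injective_id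
  | cons i w ih => exact (h i).comp ih

theorem essFixPts_subset_Vseq_one : essFixPts ψ ⊆ Vseq ψ 1 := fun x hx => by
  obtain ⟨i, hi⟩ := hx.1
  exact Set.mem_iUnion.2 ⟨i, x, hx, hi⟩

theorem Vseq_subset_succ : ∀ n, Vseq ψ n ⊆ Vseq ψ (n + 1)
  | 0 => essFixPts_subset_Vseq_one
  | n + 1 => Set.iUnion_mono fun _ => Set.image_mono (Vseq_subset_succ n)

theorem Vseq_mono : Monotone (Vseq ψ) := monotone_nat_of_le_succ Vseq_subset_succ

theorem exists_psiWord_eq_of_mem_Vseq {n : ℕ} {x : EuclideanSpace ℝ (Fin d)}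
    (hx : x ∈ Vseq ψ n) :
    ∃ w : Fin n → Fin N, ∃ v ∈ essFixPts ψ, psiWord ψ (ofFn w) v = x := by
  induction n generalizing x with
  | zero => exact ⟨Fin.elim0, x, hx, rfl⟩
  | succ n ih =>
    obtain ⟨i, x', hx', rfl⟩ := Set.mem_iUnion.1 hx
    obtain ⟨w, v, hv, rfl⟩ := ih hx'
    exact ⟨Fin.cons i w, v, hv, by simp only [ofFn_succ, Fin.cons_zero, Fin.cons_succ]; rfl⟩

end Words

section Energy

variable {d N : ℕ} {ψ : Fin N → EuclideanSpace ℝ (Fin d) → EuclideanSpace ℝ (Fin d)}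
  {V0 : Finset (EuclideanSpace ℝ (Fin d))}
  {q : EuclideanSpace ℝ (Fin d) → EuclideanSpace ℝ (Fin d) → ℝ} {ρ : ℝ}

theorem en0_congr {f g : EuclideanSpace ℝ (Fin d) → ℝ} (h : ∀ x ∈ V0, f x = g x) :
    en0 V0 q f = en0 V0 q g := by
  unfold en0
  congr 1
  exact sum_congr rfl fun x hx => sum_congr rfl fun y hy => by rw [h x hx, h y hy]

theorem en0_nonneg (hq : ∀ x ∈ V0, ∀ y ∈ V0, 0 ≤ q x y) (f : EuclideanSpace ℝ (Fin d) → ℝ) :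
    0 ≤ en0 V0 q f :=
  mul_nonneg (by norm_num) <| sum_nonneg fun x hx => sum_nonneg fun y hy =>
    mul_nonneg (hq x hx y hy) (sq_nonneg _)

theorem en0tilde_le (hq : ∀ x ∈ V0, ∀ y ∈ V0, 0 ≤ q x y) (f : EuclideanSpace ℝ (Fin d) → ℝ) :
    en0tilde ψ V0 q f ≤ ∑ i, en0 V0 q (f ∘ ψ i) := by
  unfold en0tilde
  refine csInf_le ⟨0, ?_⟩ ⟨f, fun _ _ => rfl, rfl⟩
  rintro _ ⟨g, -, rfl⟩
  exact sum_nonneg fun i _ => en0_nonneg hq _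

theorem exists_lt_en0tilde_add (f : EuclideanSpace ℝ (Fin d) → ℝ) {ε : ℝ} (hε : 0 < ε) :
    ∃ g : EuclideanSpace ℝ (Fin d) → ℝ, (∀ x ∈ V0, g x = f x) ∧
      ∑ i, en0 V0 q (g ∘ ψ i) < en0tilde ψ V0 q f + ε := by
  obtain ⟨_, ⟨g, hg, rfl⟩, hlt⟩ := exists_lt_of_csInf_lt (by exact ⟨_, f, fun _ _ => rfl, rfl⟩)
    (lt_add_of_pos_right (en0tilde ψ V0 q f) hε)
  exact ⟨g, hg, hlt⟩

theorem enLevel_nonneg (hρ : 0 ≤ ρ) (hq : ∀ x ∈ V0, ∀ y ∈ V0, 0 ≤ q x y) (n : ℕ)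
    (f : EuclideanSpace ℝ (Fin d) → ℝ) : 0 ≤ enLevel ψ V0 q ρ n f :=
  mul_nonneg (pow_nonneg hρ n) (sum_nonneg fun _ _ => en0_nonneg hq _)

theorem enLevel_succ (m : ℕ) (f : EuclideanSpace ℝ (Fin d) → ℝ) :
    enLevel ψ V0 q ρ (m + 1) f =
      ρ ^ (m + 1) * ∑ w : Fin m → Fin N, ∑ i, en0 V0 q (f ∘ psiWord ψ (ofFn w) ∘ ψ i) := by
  unfold enLevel
  congr 1
  rw [← (Fin.snocEquiv fun _ => Fin N).sum_comp, Fintype.sum_prod_type, sum_comm]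
  refine sum_congr rfl fun w _ => sum_congr rfl fun i _ => ?_
  change en0 V0 q (f ∘ psiWord ψ (ofFn (Fin.snoc w i))) = _
  rw [ofFn_succ', Fin.snoc_last, concat_eq_append, psiWord_append]
  simp only [Fin.snoc_castSucc]
  rfl

theorem enLevel_eq_sum_en0tilde
    (hqinv : ∀ f : EuclideanSpace ℝ (Fin d) → ℝ, en0 V0 q f = ρ * en0tilde ψ V0 q f)
    (m : ℕ) (f : EuclideanSpace ℝ (Fin d) → ℝ) :
    enLevel ψ V0 q ρ m f =
      ρ ^ (m + 1) * ∑ w : Fin m → Fin N, en0tilde ψ V0 q (f ∘ psiWord ψ (ofFn w)) := by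
  simp only [enLevel, hqinv, ← mul_sum, pow_succ, mul_assoc]

theorem enLevel_le_enLevel_succ (hρ : 0 ≤ ρ) (hq : ∀ x ∈ V0, ∀ y ∈ V0, 0 ≤ q x y)
    (hqinv : ∀ f : EuclideanSpace ℝ (Fin d) → ℝ, en0 V0 q f = ρ * en0tilde ψ V0 q f)
    (m : ℕ) (f : EuclideanSpace ℝ (Fin d) → ℝ) :
    enLevel ψ V0 q ρ m f ≤ enLevel ψ V0 q ρ (m + 1) f := by
  rw [enLevel_eq_sum_en0tilde hqinv, enLevel_succ]
  gcongr with w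
  exact en0tilde_le hq _

end Energy

namespace IsNestedFractal

variable {d N : ℕ} {β : ℝ} {ψ : Fin N → EuclideanSpace ℝ (Fin d) → EuclideanSpace ℝ (Fin d)}
  {F : Set (EuclideanSpace ℝ (Fin d))}

theorem dist_map (hnf : IsNestedFractal β ψ F) (i : Fin N) (a b : EuclideanSpace ℝ (Fin d)) :
    dist (ψ i a) (ψ i b) = β⁻¹ * dist a b := by
  obtain ⟨U, γ, hU⟩ := hnf.similitude i
  rw [hU, hU, dist_add_right, dist_smul₀, U.dist_map, Real.norm_eq_abs,
    abs_of_pos (inv_pos.2 (one_pos.trans hnf.beta_gt_one))]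

theorem injective (hnf : IsNestedFractal β ψ F) (i : Fin N) : Injective (ψ i) := fun a b h => by
  have hab := hnf.dist_map i a b
  rw [h, dist_self, eq_comm, mul_eq_zero, dist_eq_zero] at hab
  exact hab.resolve_left (inv_ne_zero (one_pos.trans hnf.beta_gt_one).ne')

theorem contractingWith (hnf : IsNestedFractal β ψ F) (i : Fin N) :
    ContractingWith (Real.toNNReal β⁻¹) (ψ i) :=
  ⟨Real.toNNReal_lt_one.2 (inv_lt_one_of_one_lt₀ hnf.beta_gt_one),
    LipschitzWith.of_dist_le_mul fun a b => by
      rw [hnf.dist_map, Real.coe_toNNReal _ (inv_nonneg.2 (zero_le_one.trans hnf.beta_gt_one.le))]⟩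

theorem mapsTo (hnf : IsNestedFractal β ψ F) (i : Fin N) : Set.MapsTo (ψ i) F F := by
  intro x hx
  rw [hnf.F_invariant]
  exact Set.mem_iUnion.2 ⟨i, x, hx, rfl⟩

theorem fixPts_subset (hnf : IsNestedFractal β ψ F) : fixPts ψ ⊆ F := by
  rintro x ⟨i, hx⟩
  obtain ⟨z, hz⟩ := hnf.F_nonempty
  have hc := hnf.contractingWith i
  rw [hc.fixedPoint_unique hx]
  exact hnf.F_compact.isClosed.mem_of_tendsto (hc.tendsto_iterate_fixedPoint z)
    (Eventually.of_forall fun n => (hnf.mapsTo i).iterate n hz)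

theorem Vseq_subset (hnf : IsNestedFractal β ψ F) : ∀ n, Vseq ψ n ⊆ F
  | 0 => fun _ hx => hnf.fixPts_subset hx.1
  | n + 1 => Set.iUnion_subset fun i =>
      (Set.image_mono (hnf.Vseq_subset n)).trans (hnf.mapsTo i).image_subset

theorem mem_essFixPts_of_psiWord_eq (hnf : IsNestedFractal β ψ F) {m : ℕ}
    {w w' : Fin m → Fin N} (hww : w ≠ w') {v v' : EuclideanSpace ℝ (Fin d)} (hv : v ∈ F)
    (hv' : v' ∈ F) (h : psiWord ψ (ofFn w) v = psiWord ψ (ofFn w') v') :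
    v ∈ essFixPts ψ ∧ v' ∈ essFixPts ψ := by
  have hm : 1 ≤ m := Nat.one_le_iff_ne_zero.2 <| by
    rintro rfl
    exact hww (Subsingleton.elim _ _)
  have hmem : psiWord ψ (ofFn w) v ∈
      psiWord ψ (ofFn w) '' F ∩ psiWord ψ (ofFn w') '' F := ⟨⟨v, hv, rfl⟩, ⟨v', hv', h.symm⟩⟩
  rw [hnf.nesting m hm _ _ length_ofFn length_ofFn (ofFn_injective.ne hww)] at hmem
  obtain ⟨⟨u, hu, hwu⟩, ⟨u', hu', hwu'⟩⟩ := hmem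
  rw [← psiWord_injective hnf.injective _ hwu, ← psiWord_injective hnf.injective _ (hwu'.trans h)]
  exact ⟨hu, hu'⟩

/-- `G w` is a function on the cell `ψ_w(V_1)`, read in the coordinates of `ψ_w`. -/
theorem exists_glue (hnf : IsNestedFractal β ψ F) {m : ℕ} (f : EuclideanSpace ℝ (Fin d) → ℝ)
    (G : (Fin m → Fin N) → EuclideanSpace ℝ (Fin d) → ℝ)
    (hG : ∀ w, ∀ v ∈ essFixPts ψ, G w v = f (psiWord ψ (ofFn w) v)) :
    ∃ g : EuclideanSpace ℝ (Fin d) → ℝ,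
      ∀ w, ∀ v ∈ Vseq ψ 1, g (psiWord ψ (ofFn w) v) = G w v := by
  let emb : {p : (Fin m → Fin N) × EuclideanSpace ℝ (Fin d) // p.2 ∈ Vseq ψ 1} →
      EuclideanSpace ℝ (Fin d) := fun p => psiWord ψ (ofFn p.1.1) p.1.2
  have hfac : FactorsThrough (fun p => G p.1.1 p.1.2) emb := by
    rintro ⟨⟨w, v⟩, hv⟩ ⟨⟨w', v'⟩, hv'⟩ (h : psiWord ψ (ofFn w) v = psiWord ψ (ofFn w') v')
    change G w v = G w' v'
    by_cases hww : w = w'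
    · subst hww
      rw [psiWord_injective hnf.injective _ h]
    · obtain ⟨he, he'⟩ :=
        hnf.mem_essFixPts_of_psiWord_eq hww (hnf.Vseq_subset 1 hv) (hnf.Vseq_subset 1 hv') h
      rw [hG w v he, hG w' v' he', h]
  exact ⟨extend emb (fun p => G p.1.1 p.1.2) f, fun w v hv => hfac.extend_apply f ⟨(w, v), hv⟩⟩

theorem exists_enLevel_succ_le (hnf : IsNestedFractal β ψ F)
    {V0 : Finset (EuclideanSpace ℝ (Fin d))}
    (hV0 : (V0 : Set (EuclideanSpace ℝ (Fin d))) = essFixPts ψ)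
    {q : EuclideanSpace ℝ (Fin d) → EuclideanSpace ℝ (Fin d) → ℝ} {ρ : ℝ} (hρ : 0 ≤ ρ)
    (hqinv : ∀ f : EuclideanSpace ℝ (Fin d) → ℝ, en0 V0 q f = ρ * en0tilde ψ V0 q f)
    (m : ℕ) (f : EuclideanSpace ℝ (Fin d) → ℝ) {ε : ℝ} (hε : 0 < ε) :
    ∃ g : EuclideanSpace ℝ (Fin d) → ℝ, (∀ z ∈ Vseq ψ m, g z = f z) ∧
      enLevel ψ V0 q ρ (m + 1) g ≤ enLevel ψ V0 q ρ m f + ε := by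
  have hmemV0 : ∀ v, v ∈ V0 ↔ v ∈ essFixPts ψ := fun v => by rw [← mem_coe, hV0]
  set C : ℝ := ρ ^ (m + 1) * Fintype.card (Fin m → Fin N)
  have hC : 0 < C + 1 := by positivity
  choose G hGf hGlt using fun w : Fin m → Fin N =>
    exists_lt_en0tilde_add (ψ := ψ) (q := q) (f ∘ psiWord ψ (ofFn w)) (div_pos hε hC)
  obtain ⟨g, hg⟩ := hnf.exists_glue f G fun w v hv => hGf w v ((hmemV0 v).2 hv)
  refine ⟨g, fun z hz => ?_, ?_⟩
  · obtain ⟨w, v, hv, rfl⟩ := exists_psiWord_eq_of_mem_Vseq hz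
    rw [hg w v (essFixPts_subset_Vseq_one hv)]
    exact hGf w v ((hmemV0 v).2 hv)
  · have hcell : ∀ w i, en0 V0 q (g ∘ psiWord ψ (ofFn w) ∘ ψ i) = en0 V0 q (G w ∘ ψ i) :=
      fun w i => en0_congr fun v hv =>
        hg w (ψ i v) (Set.mem_iUnion.2 ⟨i, v, (hmemV0 v).1 hv, rfl⟩)
    calc enLevel ψ V0 q ρ (m + 1) g
        = ρ ^ (m + 1) * ∑ w : Fin m → Fin N, ∑ i, en0 V0 q (G w ∘ ψ i) := by
          simp only [enLevel_succ, hcell]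
      _ ≤ ρ ^ (m + 1) * ∑ w : Fin m → Fin N,
            (en0tilde ψ V0 q (f ∘ psiWord ψ (ofFn w)) + ε / (C + 1)) := by
          gcongr with w
          exact (hGlt w).le
      _ = enLevel ψ V0 q ρ m f + C * (ε / (C + 1)) := by
          rw [enLevel_eq_sum_en0tilde hqinv, sum_add_distrib, sum_const, card_univ, nsmul_eq_mul]
          ring
      _ ≤ enLevel ψ V0 q ρ m f + ε := by
          gcongr
          rw [mul_div_assoc', div_le_iff₀ hC]
          nlinarith

end IsNestedFractal

theorem sInf_energy_eq_of_forall_exists_le_add {X : Type*} {E E' : (X → ℝ) → ℝ} {x y : X}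
    (hxy : x ≠ y) (hE : ∀ f, 0 ≤ E f) (hle : ∀ f, E f ≤ E' f)
    (hext : ∀ f, ∀ ε > 0, ∃ g, g x = f x ∧ g y = f y ∧ E' g ≤ E f + ε) :
    sInf {t | ∃ f : X → ℝ, f x = 1 ∧ f y = 0 ∧ t = E' f} =
      sInf {t | ∃ f : X → ℝ, f x = 1 ∧ f y = 0 ∧ t = E f} := by
  classical
  have hne : ∀ E : (X → ℝ) → ℝ, {t | ∃ f : X → ℝ, f x = 1 ∧ f y = 0 ∧ t = E f}.Nonempty :=
    fun E => ⟨_, fun z => if z = x then 1 else 0, if_pos rfl, if_neg hxy.symm, rfl⟩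
  have hbdd : ∀ E : (X → ℝ) → ℝ, (∀ f, 0 ≤ E f) →
      BddBelow {t | ∃ f : X → ℝ, f x = 1 ∧ f y = 0 ∧ t = E f} := by
    refine fun E hE0 => ⟨0, ?_⟩
    rintro _ ⟨f, -, -, rfl⟩
    exact hE0 f
  refine le_antisymm (le_of_forall_pos_le_add fun ε hε => ?_) (le_csInf (hne E') ?_)
  · obtain ⟨_, ⟨f, hfx, hfy, rfl⟩, hf⟩ :=
      exists_lt_of_csInf_lt (hne E) (lt_add_of_pos_right _ (half_pos hε))
    obtain ⟨g, hgx, hgy, hg⟩ := hext f (ε / 2) (half_pos hε)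
    calc sInf {t | ∃ f : X → ℝ, f x = 1 ∧ f y = 0 ∧ t = E' f}
        ≤ E' g := csInf_le (hbdd E' fun f => (hE f).trans (hle f))
          ⟨g, hgx.trans hfx, hgy.trans hfy, rfl⟩
      _ ≤ _ := by linarith
  · rintro _ ⟨f, hfx, hfy, rfl⟩
    exact (csInf_le (hbdd E hE) ⟨f, hfx, hfy, rfl⟩).trans (hle f)

theorem resistance_decimation_compatibility_general
    {d N : ℕ} (β : ℝ)
    (ψ : Fin N → EuclideanSpace ℝ (Fin d) → EuclideanSpace ℝ (Fin d))
    (F : Set (EuclideanSpace ℝ (Fin d)))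
    (hnf : IsNestedFractal β ψ F)
    (V0 : Finset (EuclideanSpace ℝ (Fin d)))
    (hV0 : (V0 : Set (EuclideanSpace ℝ (Fin d))) = essFixPts ψ)
    (ρ : ℝ) (hρ : 1 < ρ)
    (q : EuclideanSpace ℝ (Fin d) → EuclideanSpace ℝ (Fin d) → ℝ)
    (hqdiag : ∀ x ∈ V0, q x x = 0)
    (hqsympos : ∀ x ∈ V0, ∀ y ∈ V0, x ≠ y → q x y = q y x ∧ 0 < q x y)
    (hqinv : ∀ f : EuclideanSpace ℝ (Fin d) → ℝ, en0 V0 q f = ρ * en0tilde ψ V0 q f) :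
    ∀ m n : ℕ, n ≤ m → ∀ x ∈ Vseq ψ n, ∀ y ∈ Vseq ψ n,
      resLevel ψ V0 q ρ m x y = resLevel ψ V0 q ρ n x y := by
  have hq : ∀ x ∈ V0, ∀ y ∈ V0, 0 ≤ q x y := fun x hx y hy => by
    rcases eq_or_ne x y with rfl | hxy
    · exact (hqdiag x hx).ge
    · exact (hqsympos x hx y hy hxy).2.le
  have hρ0 : 0 ≤ ρ := zero_le_one.trans hρ.le
  intro m n hnm x hx y hy
  rcases eq_or_ne x y with rfl | hxy
  · simp only [resLevel, if_pos]
  simp only [resLevel, if_neg hxy]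
  congr 1
  induction m, hnm using Nat.le_induction with
  | base => rfl
  | succ m hnm ih =>
    rw [← ih]
    refine sInf_energy_eq_of_forall_exists_le_add hxy (enLevel_nonneg hρ0 hq m)
      (enLevel_le_enLevel_succ hρ0 hq hqinv m) fun f ε hε => ?_
    obtain ⟨g, hgf, hg⟩ := hnf.exists_enLevel_succ_le hV0 hρ0 hqinv m f hε
    exact ⟨g, hgf x (Vseq_mono hnm hx), hgf y (Vseq_mono hnm hy), hg⟩

/-- compatibility of effective resistances under decimation: if `(q, ρ)` satisfies
the renormalisation invariance `E_0 = ρ Ẽ_0`, then for all `m ≥ n ≥ 0` and all `x, y ∈ V_n` one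
has `R_m(x,y) = R_n(x,y)`, where `R_k` is the effective resistance associated with the level-`k`
energy `E_k(f) = ρ^k Σ_{w ∈ Iᵏ} E_0(f ∘ ψ_w)`. -/
theorem resistance_decimation_compatibility
    {d N : ℕ} (β : ℝ)
    (ψ : Fin N → EuclideanSpace ℝ (Fin d) → EuclideanSpace ℝ (Fin d))
    (F : Set (EuclideanSpace ℝ (Fin d)))
    (hnf : IsNestedFractal β ψ F)
    (V0 : Finset (EuclideanSpace ℝ (Fin d)))
    (hV0 : (V0 : Set (EuclideanSpace ℝ (Fin d))) = essFixPts ψ)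
    (ρ : ℝ) (hρ : 1 < ρ)
    (q : EuclideanSpace ℝ (Fin d) → EuclideanSpace ℝ (Fin d) → ℝ)
    (hqdiag : ∀ x ∈ V0, q x x = 0)
    (hqrow : ∀ x ∈ V0, ∑ y ∈ V0, q x y = 1)
    (hqsympos : ∀ x ∈ V0, ∀ y ∈ V0, x ≠ y → q x y = q y x ∧ 0 < q x y)
    (hqinv : ∀ f : EuclideanSpace ℝ (Fin d) → ℝ, en0 V0 q f = ρ * en0tilde ψ V0 q f) :
    ∀ m n : ℕ, n ≤ m → ∀ x ∈ Vseq ψ n, ∀ y ∈ Vseq ψ n,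
      resLevel ψ V0 q ρ m x y = resLevel ψ V0 q ρ n x y :=
  resistance_decimation_compatibility_general β ψ F hnf V0 hV0 ρ hρ q hqdiag hqsympos hqinv
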